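/- Let L > 0 and T > 0, and let φ be a classical solution on [0,L]×[0,T] of the adjoint linear KdV system φ_t + φ_x + φ_{xxx} = 0 with boundary conditions φ(L,t) = 0, φ_x(L,t) = 0 and φ(0,t) + φ_{xx}(0,t) = 0 for all t ∈ [0,T]. Then the multiplier identity −T ∫₀^L φ(x,0)² dx + ∫₀^T (T − t) ( φ(0,t)² + φ_x(0,t)² ) dt + ∫₀^T ∫₀^L φ(x,t)² dx dt = 0 holds. -/

import Mathlib

/-!
Let `E t = ∫₀^L φ(x,t)² dx`. Since `φ² + 2 φ φ_xx - φ_x²` is an antiderivative in `x` of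
`2 φ (φ_x + φ_xxx) = -2 φ φ_t`, the boundary conditions give
`E'(t) = -(φ(0,t)² + φ_x(0,t)²)`. Integrating `(T - t) E'(t)` by parts over `[0,T]` turns this
into the identity.
-/

open MeasureTheory Set Function

section ParametricIntegral

variable {F F' : ℝ → ℝ → ℝ} {a b c d : ℝ}

theorem continuousOn_intervalIntegral_of_continuousOn_prod (hab : a ≤ b) (hcd : c ≤ d)
    (hF : ContinuousOn (uncurry F) (Icc a b ×ˢ Icc c d)) :
    ContinuousOn (fun t => ∫ x in a..b, F x t) (Icc c d) := by
  -- clamping both variables to the rectangle gives a globally continuous extension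
  let G : ℝ → ℝ → ℝ := fun t x => F (projIcc a b hab x) (projIcc c d hcd t)
  have hG : Continuous (uncurry G) :=
    hF.comp_continuous
      (f := fun p : ℝ × ℝ => ((projIcc a b hab p.2 : ℝ), (projIcc c d hcd p.1 : ℝ))) (by fun_prop)
      fun p => ⟨(projIcc a b hab p.2).2, (projIcc c d hcd p.1).2⟩
  refine (intervalIntegral.continuous_parametric_intervalIntegral_of_continuous' hG a b)
    |>.continuousOn.congr fun t ht => intervalIntegral.integral_congr fun x hx => ?_
  rw [uIcc_of_le hab] at hx
  simp [G, projIcc_of_mem _ hx, projIcc_of_mem _ ht]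

theorem hasDerivAt_intervalIntegral_of_continuousOn_prod (hab : a ≤ b)
    (hF : ContinuousOn (uncurry F) (Icc a b ×ˢ Icc c d))
    (hF' : ContinuousOn (uncurry F') (Icc a b ×ˢ Icc c d))
    (hderiv : ∀ x ∈ Icc a b, ∀ t ∈ Icc c d, HasDerivAt (F x ·) (F' x t) t)
    {t₀ : ℝ} (ht₀ : t₀ ∈ Ioo c d) :
    HasDerivAt (fun t => ∫ x in a..b, F x t) (∫ x in a..b, F' x t₀) t₀ := by
  obtain ⟨C, hC⟩ := (isCompact_Icc.prod isCompact_Icc).exists_bound_of_continuousOn hF'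
  have hslice {G : ℝ → ℝ → ℝ} (hG : ContinuousOn (uncurry G) (Icc a b ×ˢ Icc c d))
      {t : ℝ} (ht : t ∈ Icc c d) : AEStronglyMeasurable (G · t) (volume.restrict (uIoc a b)) := by
    rw [uIoc_of_le hab]
    exact ((hG.uncurry_right t ht).mono Ioc_subset_Icc_self).aestronglyMeasurable measurableSet_Ioc
  refine (intervalIntegral.hasDerivAt_integral_of_dominated_loc_of_deriv_le
    (F := fun t x => F x t) (F' := fun t x => F' x t) (bound := fun _ => C)
    (isOpen_Ioo.mem_nhds ht₀) ?_ ?_ (hslice hF' (Ioo_subset_Icc_self ht₀)) ?_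
    intervalIntegrable_const ?_).2
  · filter_upwards [isOpen_Ioo.mem_nhds ht₀] with t ht using hslice hF (Ioo_subset_Icc_self ht)
  · exact (hF.uncurry_right t₀ (Ioo_subset_Icc_self ht₀)).intervalIntegrable_of_Icc hab
  · refine ae_of_all _ fun x hx t ht => hC (x, t) ⟨?_, Ioo_subset_Icc_self ht⟩
    exact Ioc_subset_Icc_self (uIoc_of_le hab ▸ hx)
  · refine ae_of_all _ fun x hx t ht => hderiv x ?_ t (Ioo_subset_Icc_self ht)
    exact Ioc_subset_Icc_self (uIoc_of_le hab ▸ hx)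

end ParametricIntegral

theorem intervalIntegral_two_mul_mul_add_third_deriv {u u₁ u₂ u₃ : ℝ → ℝ} {a b : ℝ}
    (hu : ∀ x ∈ uIcc a b, HasDerivAt u (u₁ x) x)
    (hu₁ : ∀ x ∈ uIcc a b, HasDerivAt u₁ (u₂ x) x)
    (hu₂ : ∀ x ∈ uIcc a b, HasDerivAt u₂ (u₃ x) x)
    (hu₃ : IntervalIntegrable u₃ volume a b) :
    ∫ x in a..b, 2 * u x * (u₁ x + u₃ x)
      = (u b ^ 2 + 2 * u b * u₂ b - u₁ b ^ 2) - (u a ^ 2 + 2 * u a * u₂ a - u₁ a ^ 2) := by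
  have hu_cont : ContinuousOn u (uIcc a b) := fun x hx => (hu x hx).continuousAt.continuousWithinAt
  have hu₁_cont : ContinuousOn u₁ (uIcc a b) :=
    fun x hx => (hu₁ x hx).continuousAt.continuousWithinAt
  refine intervalIntegral.integral_eq_sub_of_hasDerivAt
    (f := fun x => u x ^ 2 + 2 * u x * u₂ x - u₁ x ^ 2) (fun x hx => ?_) ?_
  · convert (((hu x hx).pow 2).add (((hu x hx).mul (hu₂ x hx)).const_mul 2)).sub
      ((hu₁ x hx).pow 2) using 1
    · ext y; simp only [Pi.add_apply, Pi.sub_apply, Pi.mul_apply, Pi.pow_apply]; ring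
    · ring
  · exact (hu₁_cont.intervalIntegrable.add hu₃).continuousOn_mul (continuousOn_const.mul hu_cont)

theorem intervalIntegral_const_sub_mul_deriv {E E' : ℝ → ℝ} {a b : ℝ}
    (hE : ContinuousOn E (uIcc a b))
    (hE' : ∀ t ∈ Ioo (min a b) (max a b), HasDerivAt E (E' t) t)
    (hint : IntervalIntegrable E' volume a b) :
    ∫ t in a..b, (b - t) * E' t = (∫ t in a..b, E t) - (b - a) * E a := by
  rw [intervalIntegral.integral_mul_deriv_eq_deriv_mul_of_hasDerivAt (u := fun t => b - t)
    (u' := fun _ => -1) (by fun_prop) hE (fun t _ => by simpa using (hasDerivAt_id t).const_sub b)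
    hE' intervalIntegrable_const hint]
  simp only [sub_self, zero_mul, neg_one_mul, intervalIntegral.integral_neg]
  ring

theorem adjoint_kdv_multiplier_identity_general
    (L T : ℝ) (hL : 0 < L) (hT : 0 < T)
    (φ φt φx φxx φxxx : ℝ → ℝ → ℝ)
    (hφt : ∀ x ∈ Icc (0:ℝ) L, ∀ t ∈ Icc (0:ℝ) T,
      HasDerivAt (fun s => φ x s) (φt x t) t)
    (hφx : ∀ x ∈ Icc (0:ℝ) L, ∀ t ∈ Icc (0:ℝ) T,
      HasDerivAt (fun y => φ y t) (φx x t) x)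
    (hφxx : ∀ x ∈ Icc (0:ℝ) L, ∀ t ∈ Icc (0:ℝ) T,
      HasDerivAt (fun y => φx y t) (φxx x t) x)
    (hφxxx : ∀ x ∈ Icc (0:ℝ) L, ∀ t ∈ Icc (0:ℝ) T,
      HasDerivAt (fun y => φxx y t) (φxxx x t) x)
    (hcont : ContinuousOn (fun p : ℝ × ℝ => φ p.1 p.2) (Icc 0 L ×ˢ Icc 0 T))
    (hcontt : ContinuousOn (fun p : ℝ × ℝ => φt p.1 p.2) (Icc 0 L ×ˢ Icc 0 T))
    (hcontx : ContinuousOn (fun p : ℝ × ℝ => φx p.1 p.2) (Icc 0 L ×ˢ Icc 0 T))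
    (hcontxxx : ContinuousOn (fun p : ℝ × ℝ => φxxx p.1 p.2) (Icc 0 L ×ˢ Icc 0 T))
    (hpde : ∀ x ∈ Icc (0:ℝ) L, ∀ t ∈ Icc (0:ℝ) T,
      φt x t + φx x t + φxxx x t = 0)
    (hbc1 : ∀ t ∈ Icc (0:ℝ) T, φ L t = 0)
    (hbc2 : ∀ t ∈ Icc (0:ℝ) T, φx L t = 0)
    (hbc3 : ∀ t ∈ Icc (0:ℝ) T, φ 0 t + φxx 0 t = 0) :
    -T * (∫ x in (0:ℝ)..L, (φ x 0) ^ 2)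
      + (∫ t in (0:ℝ)..T, (T - t) * ((φ 0 t) ^ 2 + (φx 0 t) ^ 2))
      + (∫ t in (0:ℝ)..T, ∫ x in (0:ℝ)..L, (φ x t) ^ 2)
      = 0 := by
  set g : ℝ → ℝ := fun t => φ 0 t ^ 2 + φx 0 t ^ 2
  set E : ℝ → ℝ := fun t => ∫ x in (0:ℝ)..L, φ x t ^ 2
  have hflux : ∀ t ∈ Icc (0:ℝ) T, ∫ x in (0:ℝ)..L, 2 * φ x t * φt x t = -g t := by
    intro t ht
    rw [← uIcc_of_le hL.le] at hφx hφxx hφxxx hpde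
    have hbc3' : φxx 0 t = -φ 0 t := by linarith [hbc3 t ht]
    calc ∫ x in (0:ℝ)..L, 2 * φ x t * φt x t
        = ∫ x in (0:ℝ)..L, -(2 * φ x t * (φx x t + φxxx x t)) :=
          intervalIntegral.integral_congr fun x hx => by
            rw [show φt x t = -(φx x t + φxxx x t) by linarith [hpde x hx t ht]]; ring
      _ = -g t := by
          rw [intervalIntegral.integral_neg, intervalIntegral_two_mul_mul_add_third_deriv
            (fun x hx => hφx x hx t ht) (fun x hx => hφxx x hx t ht)
            (fun x hx => hφxxx x hx t ht)
            ((hcontxxx.uncurry_right t ht).intervalIntegrable_of_Icc hL.le),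
            hbc1 t ht, hbc2 t ht, hbc3']
          ring
  have hE_cont : ContinuousOn E (Icc 0 T) :=
    continuousOn_intervalIntegral_of_continuousOn_prod hL.le hT.le (hcont.fun_pow 2)
  have hE_deriv : ∀ t ∈ Ioo 0 T, HasDerivAt E (-g t) t := fun t ht =>
    (hasDerivAt_intervalIntegral_of_continuousOn_prod (F := fun x t => φ x t ^ 2)
      (F' := fun x t => 2 * φ x t * φt x t) hL.le (hcont.fun_pow 2)
      ((hcont.const_mul 2).mul hcontt)
      (fun x hx s hs => ((hφt x hx s hs).pow 2).congr_deriv (by ring)) ht).congr_deriv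
      (hflux t (Ioo_subset_Icc_self ht))
  have h0 : (0:ℝ) ∈ Icc 0 L := left_mem_Icc.2 hL.le
  have hg_cont : ContinuousOn g (Icc 0 T) :=
    ((hcont.uncurry_left 0 h0).pow 2).add ((hcontx.uncurry_left 0 h0).pow 2)
  have hparts := intervalIntegral_const_sub_mul_deriv (uIcc_of_le hT.le ▸ hE_cont)
    (fun t ht => hE_deriv t (by simpa [hT.le] using ht))
    (hg_cont.neg.intervalIntegrable_of_Icc hT.le)
  simp only [mul_neg, intervalIntegral.integral_neg, sub_zero] at hparts
  linarith

/-- **Multiplier identity for the adjoint linear KdV system.**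
If `φ` is a classical solution of `φ_t + φ_x + φ_{xxx} = 0` on `[0,L] × [0,T]`
with boundary conditions `φ(L,t) = 0`, `φ_x(L,t) = 0`, `φ(0,t) + φ_{xx}(0,t) = 0`, then
`−T ∫₀^L φ(x,0)² dx + ∫₀^T (T−t)(φ(0,t)² + φ_x(0,t)²) dt + ∫₀^T ∫₀^L φ² dx dt = 0`. -/
theorem adjoint_kdv_multiplier_identity
    (L T : ℝ) (hL : 0 < L) (hT : 0 < T)
    (φ φt φx φxx φxxx : ℝ → ℝ → ℝ)
    (hφt : ∀ x ∈ Icc (0:ℝ) L, ∀ t ∈ Icc (0:ℝ) T,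
      HasDerivAt (fun s => φ x s) (φt x t) t)
    (hφx : ∀ x ∈ Icc (0:ℝ) L, ∀ t ∈ Icc (0:ℝ) T,
      HasDerivAt (fun y => φ y t) (φx x t) x)
    (hφxx : ∀ x ∈ Icc (0:ℝ) L, ∀ t ∈ Icc (0:ℝ) T,
      HasDerivAt (fun y => φx y t) (φxx x t) x)
    (hφxxx : ∀ x ∈ Icc (0:ℝ) L, ∀ t ∈ Icc (0:ℝ) T,
      HasDerivAt (fun y => φxx y t) (φxxx x t) x)
    (hcont : ContinuousOn (fun p : ℝ × ℝ => φ p.1 p.2) (Icc 0 L ×ˢ Icc 0 T))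
    (hcontt : ContinuousOn (fun p : ℝ × ℝ => φt p.1 p.2) (Icc 0 L ×ˢ Icc 0 T))
    (hcontx : ContinuousOn (fun p : ℝ × ℝ => φx p.1 p.2) (Icc 0 L ×ˢ Icc 0 T))
    (hcontxx : ContinuousOn (fun p : ℝ × ℝ => φxx p.1 p.2) (Icc 0 L ×ˢ Icc 0 T))
    (hcontxxx : ContinuousOn (fun p : ℝ × ℝ => φxxx p.1 p.2) (Icc 0 L ×ˢ Icc 0 T))
    (hpde : ∀ x ∈ Icc (0:ℝ) L, ∀ t ∈ Icc (0:ℝ) T,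
      φt x t + φx x t + φxxx x t = 0)
    (hbc1 : ∀ t ∈ Icc (0:ℝ) T, φ L t = 0)
    (hbc2 : ∀ t ∈ Icc (0:ℝ) T, φx L t = 0)
    (hbc3 : ∀ t ∈ Icc (0:ℝ) T, φ 0 t + φxx 0 t = 0) :
    -T * (∫ x in (0:ℝ)..L, (φ x 0) ^ 2)
      + (∫ t in (0:ℝ)..T, (T - t) * ((φ 0 t) ^ 2 + (φx 0 t) ^ 2))
      + (∫ t in (0:ℝ)..T, ∫ x in (0:ℝ)..L, (φ x t) ^ 2)
      = 0 :=
  adjoint_kdv_multiplier_identity_general L T hL hT φ φt φx φxx φxxx hφt hφx hφxx hφxxx hcont hcontt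
    hcontx hcontxxx hpde hbc1 hbc2 hbc3
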